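/- arXiv:2207.07287 — 2 statements merged into one kernel-verified Lean document; each statement's English description precedes it below -/
import Mathlib

section
/- Let $v$ be uniformly distributed on the unit sphere in $\mathbb{R}^n$ with $n \ge 2$, let $x \in \mathbb{R}^n$ be a fixed unit vector, and let $\gamma > 0$. Then $\mathbb{P}(|\langle x, v\rangle| \le \gamma) \le \sqrt{\pi n}\,\gamma$. -/
open MeasureTheory Real
open scoped RealInnerProductSpace ENNReal

namespace SphereProbAux

open ProbabilityTheory

/-- Pushforward of a `withDensity` measure along a measurable equivalence. -/
lemma map_withDensity_equiv {α β : Type*} [MeasurableSpace α] [MeasurableSpace β]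
    (e : α ≃ᵐ β) (μ : Measure α) {g : β → ℝ≥0∞} (hg : Measurable g) :
    (μ.withDensity (g ∘ e)).map e = (μ.map e).withDensity g := by
  ext s hs
  rw [Measure.map_apply e.measurable hs, withDensity_apply _ hs,
    withDensity_apply _ (e.measurable hs), setLIntegral_map hs hg e.measurable]
  rfl

/-- Tonelli for a finite product of functions of separate variables. -/
lemma lintegral_pi_prod : ∀ (m : ℕ) (μ : Fin m → Measure ℝ), (∀ i, SigmaFinite (μ i)) →
    ∀ (f : Fin m → ℝ → ℝ≥0∞), (∀ i, Measurable (f i)) →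
    ∫⁻ w, ∏ i, f i (w i) ∂(Measure.pi μ) = ∏ i, ∫⁻ t, f i t ∂(μ i) := by
  intro m
  induction m with
  | zero =>
    intro μ _ f _
    simp [Measure.pi_of_empty]
  | succ m ih =>
    intro μ hσ f hf
    haveI := hσ
    have h := measurePreserving_piFinSuccAbove μ 0
    have hg2 : Measurable fun u : Fin m → ℝ => ∏ j, f (Fin.succ j) (u j) :=
      Finset.measurable_prod _ fun j _ => (hf _).comp (measurable_pi_apply j)
    calc ∫⁻ w, ∏ i, f i (w i) ∂(Measure.pi μ)
        = ∫⁻ y, f 0 y.1 * ∏ j, f (Fin.succ j) (y.2 j)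
            ∂((μ 0).prod (Measure.pi fun j => μ (Fin.succAbove 0 j))) := by
          rw [← h.map_eq, lintegral_map_equiv]
          refine lintegral_congr fun w => ?_
          rw [Fin.prod_univ_succ]
          simp [MeasurableEquiv.piFinSuccAbove_apply, Fin.removeNth, Fin.succAbove_zero, Fin.tail]
      _ = (∫⁻ t, f 0 t ∂(μ 0)) * ∏ j, ∫⁻ t, f (Fin.succ j) t ∂(μ (Fin.succ j)) := by
          rw [lintegral_prod_mul (hf 0).aemeasurable hg2.aemeasurable]
          congr 1
          have : (fun j : Fin m => μ (Fin.succAbove 0 j)) = fun j => μ (Fin.succ j) := by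
            funext j; rw [Fin.succAbove_zero]
          rw [this, ih (fun j => μ (Fin.succ j)) (fun j => by infer_instance)
            (fun j => f (Fin.succ j)) (fun j => hf _)]
      _ = ∏ i, ∫⁻ t, f i t ∂(μ i) := (Fin.prod_univ_succ fun i => ∫⁻ t, f i t ∂(μ i)).symm

/-- The product of standard gaussians is a density measure w.r.t. Lebesgue. -/
lemma pi_gaussian_eq_withDensity (m : ℕ) :
    (Measure.pi fun _ : Fin m => gaussianReal 0 1) =
      (volume : Measure (Fin m → ℝ)).withDensity
        (fun w => ENNReal.ofReal (∏ i, gaussianPDFReal 0 1 (w i))) := by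
  refine Measure.pi_eq fun s hs => ?_
  rw [withDensity_apply _ (MeasurableSet.univ_pi hs),
    ← lintegral_indicator (MeasurableSet.univ_pi hs)]
  have hpt : ∀ w : Fin m → ℝ,
      (Set.univ.pi s).indicator (fun w => ENNReal.ofReal (∏ i, gaussianPDFReal 0 1 (w i))) w
        = ∏ i, (s i).indicator (gaussianPDF 0 1) (w i) := by
    intro w
    by_cases hw : w ∈ Set.univ.pi s
    · rw [Set.indicator_of_mem hw,
        ENNReal.ofReal_prod_of_nonneg (fun i _ => gaussianPDFReal_nonneg 0 1 (w i))]
      refine Finset.prod_congr rfl fun i _ => ?_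
      rw [Set.indicator_of_mem (hw i (Set.mem_univ i))]
      rfl
    · rw [Set.indicator_of_notMem hw]
      have : ∃ i, w i ∉ s i := by simpa [Set.mem_pi] using hw
      obtain ⟨i, hi⟩ := this
      exact (Finset.prod_eq_zero (Finset.mem_univ i) (Set.indicator_of_notMem hi _)).symm
  simp_rw [hpt]
  rw [volume_pi, lintegral_pi_prod m _ (fun i => by infer_instance) _
    (fun i => (measurable_gaussianPDF 0 1).indicator (hs i))]
  refine Finset.prod_congr rfl fun i _ => ?_
  rw [lintegral_indicator (hs i), ← gaussianReal_apply 0 one_ne_zero]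

/-- The standard gaussian measure on `EuclideanSpace ℝ (Fin n)`. -/
noncomputable def gaussE (n : ℕ) : Measure (EuclideanSpace ℝ (Fin n)) :=
  (Measure.pi fun _ : Fin n => gaussianReal 0 1).map
    (MeasurableEquiv.toLp 2 (Fin n → ℝ))

noncomputable def gaussDensity (n : ℕ) : EuclideanSpace ℝ (Fin n) → ℝ≥0∞ :=
  fun z => ENNReal.ofReal ((√(2 * π))⁻¹ ^ n * rexp (-‖z‖ ^ 2 / 2))

lemma measurable_gaussDensity (n : ℕ) : Measurable (gaussDensity n) := by
  apply ENNReal.measurable_ofReal.comp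
  exact (measurable_const.mul ((continuous_norm.pow 2).neg.div_const 2).rexp.measurable)

lemma gaussE_eq (n : ℕ) : gaussE n = volume.withDensity (gaussDensity n) := by
  have h1 : (fun w : Fin n → ℝ => ENNReal.ofReal (∏ i, gaussianPDFReal 0 1 (w i)))
      = (gaussDensity n) ∘ (MeasurableEquiv.toLp 2 (Fin n → ℝ)) := by
    funext w
    have hpdf : ∀ i, gaussianPDFReal 0 1 (w i) = (√(2 * π))⁻¹ * rexp (-(w i) ^ 2 / 2) := by
      intro i
      simp [gaussianPDFReal]
    simp only [Function.comp_apply, gaussDensity]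
    congr 1
    simp only [hpdf]
    rw [Finset.prod_mul_distrib, Finset.prod_const, Finset.card_univ, Fintype.card_fin,
      ← Real.exp_sum]
    congr 2
    have hnorm : ‖(MeasurableEquiv.toLp 2 (Fin n → ℝ)) w‖ ^ 2 = ∑ i, (w i) ^ 2 := by
      rw [EuclideanSpace.norm_eq, Real.sq_sqrt (by positivity)]
      refine Finset.sum_congr rfl fun i _ => ?_
      rw [Real.norm_eq_abs, sq_abs]
      rfl
    calc ∑ i : Fin n, -w i ^ 2 / 2
        = (∑ i : Fin n, -w i ^ 2) / 2 := (Finset.sum_div _ _ _).symm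
      _ = (-∑ i : Fin n, w i ^ 2) / 2 := by rw [← Finset.sum_neg_distrib]
      _ = -‖(MeasurableEquiv.toLp 2 (Fin n → ℝ)) w‖ ^ 2 / 2 := by rw [hnorm]
  rw [gaussE, pi_gaussian_eq_withDensity, h1,
    map_withDensity_equiv _ _ (measurable_gaussDensity n),
    ← MeasurableEquiv.symm_symm (MeasurableEquiv.toLp 2 (Fin n → ℝ)),
    ((EuclideanSpace.volume_preserving_symm_measurableEquiv_toLp (Fin n)).symm _).map_eq]

instance gaussE_prob (n : ℕ) : IsProbabilityMeasure (gaussE n) :=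
  Measure.isProbabilityMeasure_map (MeasurableEquiv.measurable _).aemeasurable

/-- Rotation invariance of the gaussian measure. -/
lemma gaussE_map (n : ℕ) (e : EuclideanSpace ℝ (Fin n) ≃ₗᵢ[ℝ] EuclideanSpace ℝ (Fin n)) :
    (gaussE n).map e = gaussE n := by
  set eM : EuclideanSpace ℝ (Fin n) ≃ᵐ EuclideanSpace ℝ (Fin n) :=
    e.toHomeomorph.toMeasurableEquiv with heMdef
  have hcoe : (⇑eM : EuclideanSpace ℝ (Fin n) → EuclideanSpace ℝ (Fin n)) = ⇑e := rfl
  have he : gaussDensity n ∘ eM = gaussDensity n := by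
    funext z
    simp only [Function.comp_apply, gaussDensity, hcoe]
    rw [e.norm_map]
  calc (gaussE n).map e
      = (volume.withDensity (gaussDensity n ∘ eM)).map eM := by
        rw [gaussE_eq, he, hcoe]
    _ = (volume.map eM).withDensity (gaussDensity n) :=
        map_withDensity_equiv _ _ (measurable_gaussDensity n)
    _ = gaussE n := by
        rw [hcoe, e.measurePreserving.map_eq, gaussE_eq]

lemma measurableSet_band {n : ℕ} (a : EuclideanSpace ℝ (Fin n)) (c : ℝ) :
    MeasurableSet {v : EuclideanSpace ℝ (Fin n) | |⟪a, v⟫| ≤ c * ‖v‖} := by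
  have h1 : Continuous fun v : EuclideanSpace ℝ (Fin n) => |⟪a, v⟫| :=
    (continuous_const.inner continuous_id).abs
  exact (isClosed_le h1 (continuous_const.mul continuous_norm)).measurableSet

/-- An isometry-invariant measure gives the same mass to "bands" around vectors of
the same norm. -/
lemma measure_band_congr {n : ℕ} (ρ : Measure (EuclideanSpace ℝ (Fin n)))
    (hinv : ∀ f : EuclideanSpace ℝ (Fin n) ≃ₗᵢ[ℝ] EuclideanSpace ℝ (Fin n), ρ.map f = ρ)
    {a b : EuclideanSpace ℝ (Fin n)} (hab : ‖a‖ = ‖b‖) (c : ℝ) :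
    ρ {v | |⟪a, v⟫| ≤ c * ‖v‖} = ρ {v | |⟪b, v⟫| ≤ c * ‖v‖} := by
  set f := Submodule.reflection (Submodule.span ℝ {a - b})ᗮ with hf
  have hfa : f a = b := Submodule.reflection_sub hab
  have hfb : f b = a := by
    have h := (Submodule.reflection_involutive (Submodule.span ℝ {a - b})ᗮ) a
    rw [hfa] at h
    exact h
  calc ρ {v | |⟪a, v⟫| ≤ c * ‖v‖}
      = (ρ.map f) {v | |⟪b, v⟫| ≤ c * ‖v‖} := by
        rw [Measure.map_apply f.continuous.measurable (measurableSet_band b c)]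
        congr 1
        ext v
        simp only [Set.mem_preimage, Set.mem_setOf_eq]
        rw [show ⟪b, f v⟫ = ⟪a, v⟫ by rw [← hfa]; exact f.inner_map_map a v, f.norm_map]
    _ = ρ {v | |⟪b, v⟫| ≤ c * ‖v‖} := by rw [hinv f]

lemma gaussE_singleton_zero (n : ℕ) : gaussE (n + 1) {0} = 0 := by
  have hvol : (volume : Measure (EuclideanSpace ℝ (Fin (n + 1)))) {0} = 0 := by
    have h := (EuclideanSpace.volume_preserving_symm_measurableEquiv_toLp (Fin (n + 1))).measure_preimage
      (measurableSet_singleton (0 : Fin (n + 1) → ℝ)).nullMeasurableSet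
    have hpre : (MeasurableEquiv.toLp 2 (Fin (n + 1) → ℝ)).symm ⁻¹' {0} = {0} := by
      ext z
      simp only [Set.mem_preimage, Set.mem_singleton_iff]
      constructor
      · intro hz
        have := congrArg (MeasurableEquiv.toLp 2 (Fin (n + 1) → ℝ)).symm.symm hz
        simpa using this
      · intro hz; subst hz; rfl
    rw [hpre] at h
    rw [h, measure_singleton]
  rw [gaussE_eq, withDensity_apply _ (measurableSet_singleton 0),
    Measure.restrict_eq_zero.mpr hvol, lintegral_zero_measure]

/-- Gaussian mass of a symmetric interval. -/
lemma gaussianReal_abs_le {a : ℝ} (ha : 0 ≤ a) :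
    gaussianReal 0 1 {t : ℝ | |t| ≤ a} ≤ ENNReal.ofReal (2 * (√(2 * π))⁻¹ * a) := by
  rw [gaussianReal_apply 0 one_ne_zero]
  have hset : {t : ℝ | |t| ≤ a} = Set.Icc (-a) a := by ext t; simp [abs_le]
  calc ∫⁻ t in {t : ℝ | |t| ≤ a}, gaussianPDF 0 1 t
      ≤ ∫⁻ _ in {t : ℝ | |t| ≤ a}, ENNReal.ofReal ((√(2 * π))⁻¹) := by
        refine lintegral_mono fun t => ?_
        rw [gaussianPDF]
        apply ENNReal.ofReal_le_ofReal
        unfold gaussianPDFReal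
        have h1 : rexp (-(t - 0) ^ 2 / (2 * ((1 : NNReal) : ℝ))) ≤ 1 := by
          rw [Real.exp_le_one_iff]
          apply div_nonpos_of_nonpos_of_nonneg
          · nlinarith [sq_nonneg (t - 0)]
          · norm_num
        calc (√(2 * π * (1 : NNReal)))⁻¹ * rexp (-(t - 0) ^ 2 / (2 * (1 : NNReal)))
            ≤ (√(2 * π * (1 : NNReal)))⁻¹ * 1 :=
              mul_le_mul_of_nonneg_left h1 (by positivity)
          _ = (√(2 * π))⁻¹ := by norm_num
      _ = ENNReal.ofReal ((√(2 * π))⁻¹) * volume {t : ℝ | |t| ≤ a} := setLIntegral_const _ _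
      _ = ENNReal.ofReal (2 * (√(2 * π))⁻¹ * a) := by
          rw [hset, Real.volume_Icc, ← ENNReal.ofReal_mul (by positivity)]
          congr 1
          ring

/-- Crude bound on the second moment of the standard gaussian. -/
lemma gaussian_sq_moment_le :
    ∫⁻ t : ℝ, ENNReal.ofReal (t ^ 2) ∂(gaussianReal 0 1) ≤ ENNReal.ofReal 3 := by
  have hmeas : Measurable fun t : ℝ => ENNReal.ofReal (t ^ 2) := by
    exact ENNReal.measurable_ofReal.comp (measurable_id.pow_const 2)
  rw [gaussianReal_of_var_ne_zero 0 one_ne_zero,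
    lintegral_withDensity_eq_lintegral_mul _ (measurable_gaussianPDF 0 1) hmeas]
  set C : ℝ := (√(2 * π))⁻¹ * (4 / rexp 1) with hC
  have hCpos : 0 < C := by positivity
  have hpt : ∀ t : ℝ, (gaussianPDF 0 1 * fun t => ENNReal.ofReal (t ^ 2)) t
      ≤ ENNReal.ofReal (C * rexp (-(4⁻¹) * t ^ 2)) := by
    intro t
    simp only [Pi.mul_apply, gaussianPDF]
    rw [← ENNReal.ofReal_mul (gaussianPDFReal_nonneg 0 1 t)]
    apply ENNReal.ofReal_le_ofReal
    unfold gaussianPDFReal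
    have h2 : rexp (-(t - 0) ^ 2 / (2 * ((1 : NNReal) : ℝ)))
        = rexp (-(4⁻¹) * t ^ 2) * rexp (-(4⁻¹) * t ^ 2) := by
      rw [← Real.exp_add]
      norm_num
      ring_nf
    have h3 : t ^ 2 * rexp (-(4⁻¹) * t ^ 2) ≤ 4 / rexp 1 := by
      have hu : ∀ u : ℝ, 0 ≤ u → u * rexp (-u) ≤ (rexp 1)⁻¹ := by
        intro u hu0
        have h4 := Real.add_one_le_exp (u - 1)
        have h5 : u ≤ rexp (u - 1) := by linarith
        have h6 : rexp (u - 1) * rexp (-u) = (rexp 1)⁻¹ := by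
          rw [← Real.exp_add, ← Real.exp_neg]
          ring_nf
        calc u * rexp (-u) ≤ rexp (u - 1) * rexp (-u) :=
              mul_le_mul_of_nonneg_right h5 (Real.exp_nonneg _)
          _ = (rexp 1)⁻¹ := h6
      have := hu (4⁻¹ * t ^ 2) (by positivity)
      have hrw : rexp (-(4⁻¹ * t ^ 2)) = rexp (-(4⁻¹) * t ^ 2) := by ring_nf
      rw [hrw] at this
      have h7 : t ^ 2 * rexp (-(4⁻¹) * t ^ 2) = 4 * (4⁻¹ * t ^ 2 * rexp (-(4⁻¹) * t ^ 2)) := by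
        ring
      rw [h7, div_eq_mul_inv]
      have := mul_le_mul_of_nonneg_left this (by norm_num : (0:ℝ) ≤ 4)
      linarith
    calc (√(2 * π * ((1 : NNReal) : ℝ)))⁻¹ * rexp (-(t - 0) ^ 2 / (2 * ((1 : NNReal) : ℝ))) * t ^ 2
        = (√(2 * π))⁻¹ * (t ^ 2 * rexp (-(4⁻¹) * t ^ 2)) * rexp (-(4⁻¹) * t ^ 2) := by
          rw [h2]
          push_cast
          rw [mul_one]
          ring
      _ ≤ (√(2 * π))⁻¹ * (4 / rexp 1) * rexp (-(4⁻¹) * t ^ 2) := by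
          have hb : (√(2 * π))⁻¹ * (t ^ 2 * rexp (-(4⁻¹) * t ^ 2)) ≤ (√(2 * π))⁻¹ * (4 / rexp 1) :=
            mul_le_mul_of_nonneg_left h3 (by positivity)
          exact mul_le_mul_of_nonneg_right hb (Real.exp_nonneg _)
      _ = C * rexp (-(4⁻¹) * t ^ 2) := by rw [hC]
  have hint : Integrable (fun t : ℝ => C * rexp (-(4⁻¹) * t ^ 2)) := by
    exact (integrable_exp_neg_mul_sq (by norm_num : (0:ℝ) < 4⁻¹)).const_mul C
  calc ∫⁻ t, (gaussianPDF 0 1 * fun t => ENNReal.ofReal (t ^ 2)) t ∂volume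
      ≤ ∫⁻ t, ENNReal.ofReal (C * rexp (-(4⁻¹) * t ^ 2)) ∂volume := lintegral_mono hpt
    _ = ENNReal.ofReal (∫ t, C * rexp (-(4⁻¹) * t ^ 2)) := by
        rw [ofReal_integral_eq_lintegral_ofReal hint]
        exact Filter.Eventually.of_forall fun t => by positivity
    _ ≤ ENNReal.ofReal 3 := by
        apply ENNReal.ofReal_le_ofReal
        rw [MeasureTheory.integral_const_mul, integral_gaussian]
        -- C * √(π / 4⁻¹) ≤ 3
        have hsq : √(π / 4⁻¹) = 2 * √π := by
          rw [show π / 4⁻¹ = 4 * π by ring, Real.sqrt_mul (by norm_num : (0:ℝ) ≤ 4),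
            show √(4:ℝ) = 2 by
              rw [show (4:ℝ) = 2 ^ 2 by norm_num, Real.sqrt_sq (by norm_num : (0:ℝ) ≤ 2)]]
        rw [hsq, hC]
        have h2π : √(2 * π) = √2 * √π := Real.sqrt_mul (by norm_num) π
        rw [h2π]
        have hπ : 0 < √π := Real.sqrt_pos.mpr Real.pi_pos
        have h2 : 0 < √2 := Real.sqrt_pos.mpr (by norm_num)
        have he1 : (2.7182818283 : ℝ) < rexp 1 := Real.exp_one_gt_d9
        have hs2 : √2 < 1.415 := by
          rw [show (1.415:ℝ) = √(1.415 ^ 2) from (Real.sqrt_sq (by norm_num)).symm]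
          exact Real.sqrt_lt_sqrt (by norm_num) (by norm_num)
        rw [mul_inv, mul_comm ((√2)⁻¹ * (√π)⁻¹) _, div_eq_mul_inv]
        have key : 4 * (rexp 1)⁻¹ * ((√2)⁻¹ * (√π)⁻¹) * (2 * √π) = 8 * (rexp 1)⁻¹ * (√2)⁻¹ := by
          field_simp
          ring
        rw [key]
        have hepos : (0:ℝ) < rexp 1 := Real.exp_pos 1
        rw [show (8:ℝ) * (rexp 1)⁻¹ * (√2)⁻¹ = 8 / (rexp 1 * √2) by
          rw [div_eq_mul_inv, mul_inv]; ring]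
        rw [div_le_iff₀ (by positivity)]
        nlinarith [Real.sq_sqrt (by norm_num : (0:ℝ) ≤ 2)]

/-- Marginal of the product gaussian. -/
lemma pi_gauss_map_eval {m : ℕ} (j : Fin m) :
    (Measure.pi fun _ : Fin m => gaussianReal 0 1).map (fun u => u j) = gaussianReal 0 1 := by
  ext s hs
  rw [Measure.map_apply (measurable_pi_apply j) hs]
  have hset : (fun u : Fin m → ℝ => u j) ⁻¹' s
      = Set.univ.pi (Function.update (fun _ : Fin m => (Set.univ : Set ℝ)) j s) := by
    ext u
    simp only [Set.mem_preimage, Set.mem_pi, Set.mem_univ, forall_true_left]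
    constructor
    · intro h i
      rcases eq_or_ne i j with rfl | hij
      · rwa [Function.update_self]
      · rw [Function.update_of_ne hij]; trivial
    · intro h
      have := h j
      rwa [Function.update_self] at this
  rw [hset, Measure.pi_pi]
  refine Finset.prod_eq_single j (fun i _ hij => ?_) (fun h => absurd (Finset.mem_univ j) h) |>.trans ?_
  · rw [Function.update_of_ne hij]
    exact measure_univ
  · rw [Function.update_self]

/-- Expected norm bound for the product gaussian. -/
lemma pi_gauss_sqrt_sum_le {m : ℕ} (hm : 1 ≤ m) :
    ∫⁻ u, ENNReal.ofReal (√(∑ j, (u j) ^ 2)) ∂(Measure.pi fun _ : Fin m => gaussianReal 0 1)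
      ≤ ENNReal.ofReal (√(3 * m)) := by
  set c₀ : ℝ := √(3 * m) with hc₀def
  have hmpos : (0:ℝ) < m := by exact_mod_cast hm
  have hc₀ : 0 < c₀ := Real.sqrt_pos.mpr (by positivity)
  have hc₀sq : c₀ ^ 2 = 3 * m := Real.sq_sqrt (by positivity)
  have key : ∀ u : Fin m → ℝ, √(∑ j, (u j) ^ 2) ≤ (∑ j, (u j) ^ 2) * (2 * c₀)⁻¹ + c₀ / 2 := by
    intro u
    set S : ℝ := ∑ j, (u j) ^ 2 with hSdef
    have hS : 0 ≤ S := Finset.sum_nonneg fun j _ => sq_nonneg _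
    have h1 : √S * √S = S := Real.mul_self_sqrt hS
    have h2 : 0 ≤ √S := Real.sqrt_nonneg S
    have h3 : 2 * c₀ * √S ≤ S + c₀ ^ 2 := by nlinarith [sq_nonneg (√S - c₀)]
    have h4 : S * (2 * c₀)⁻¹ + c₀ / 2 = (S + c₀ ^ 2) / (2 * c₀) := by
      field_simp
    rw [h4, le_div_iff₀ (by positivity)]
    nlinarith [h3]
  have hmeasS : Measurable fun u : Fin m → ℝ => ∑ j, (u j) ^ 2 :=
    Finset.measurable_sum _ fun j _ => (measurable_pi_apply j).pow_const 2
  calc ∫⁻ u, ENNReal.ofReal (√(∑ j, (u j) ^ 2)) ∂(Measure.pi fun _ : Fin m => gaussianReal 0 1)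
      ≤ ∫⁻ u, ENNReal.ofReal ((∑ j, (u j) ^ 2) * (2 * c₀)⁻¹) + ENNReal.ofReal (c₀ / 2)
          ∂(Measure.pi fun _ : Fin m => gaussianReal 0 1) := by
        refine lintegral_mono fun u => ?_
        exact le_trans (ENNReal.ofReal_le_ofReal (key u)) ENNReal.ofReal_add_le
    _ = (∫⁻ u, ENNReal.ofReal (∑ j, (u j) ^ 2)
          ∂(Measure.pi fun _ : Fin m => gaussianReal 0 1)) * ENNReal.ofReal ((2 * c₀)⁻¹)
          + ENNReal.ofReal (c₀ / 2) := by
        rw [lintegral_add_right _ measurable_const, lintegral_const, measure_univ, mul_one]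
        congr 1
        have : ∀ u : Fin m → ℝ, ENNReal.ofReal ((∑ j, (u j) ^ 2) * (2 * c₀)⁻¹)
            = ENNReal.ofReal (∑ j, (u j) ^ 2) * ENNReal.ofReal ((2 * c₀)⁻¹) := fun u =>
          ENNReal.ofReal_mul (Finset.sum_nonneg fun j _ => sq_nonneg _)
        simp_rw [this]
        rw [lintegral_mul_const _ hmeasS.ennreal_ofReal]
    _ ≤ ENNReal.ofReal (3 * m) * ENNReal.ofReal ((2 * c₀)⁻¹) + ENNReal.ofReal (c₀ / 2) := by
        gcongr
        have hsum : ∀ u : Fin m → ℝ, ENNReal.ofReal (∑ j, (u j) ^ 2)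
            = ∑ j, ENNReal.ofReal ((u j) ^ 2) := fun u =>
          ENNReal.ofReal_sum_of_nonneg fun j _ => sq_nonneg _
        simp_rw [hsum]
        rw [lintegral_finset_sum _ fun j _ =>
          ((measurable_pi_apply j).pow_const 2).ennreal_ofReal]
        have hone : ∀ j : Fin m, ∫⁻ u, ENNReal.ofReal ((u j) ^ 2)
            ∂(Measure.pi fun _ : Fin m => gaussianReal 0 1) ≤ ENNReal.ofReal 3 := by
          intro j
          have hmap := lintegral_map (μ := Measure.pi fun _ : Fin m => gaussianReal 0 1)
            (f := fun t : ℝ => ENNReal.ofReal (t ^ 2)) (g := fun u : Fin m → ℝ => u j)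
            (by measurability) (measurable_pi_apply j)
          rw [pi_gauss_map_eval j] at hmap
          rw [← hmap]
          exact gaussian_sq_moment_le
        calc ∑ j : Fin m, ∫⁻ u, ENNReal.ofReal ((u j) ^ 2)
              ∂(Measure.pi fun _ : Fin m => gaussianReal 0 1)
            ≤ ∑ _j : Fin m, ENNReal.ofReal 3 := Finset.sum_le_sum fun j _ => hone j
          _ = ENNReal.ofReal (3 * m) := by
              rw [Finset.sum_const, Finset.card_univ, Fintype.card_fin, nsmul_eq_mul,
                show ((m : ℕ) : ℝ≥0∞) = ENNReal.ofReal (m : ℝ) by simp [ENNReal.ofReal_natCast],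
                ← ENNReal.ofReal_mul (by positivity : (0:ℝ) ≤ (m:ℝ)), mul_comm (m:ℝ) 3]
    _ = ENNReal.ofReal (3 * m * (2 * c₀)⁻¹ + c₀ / 2) := by
        rw [← ENNReal.ofReal_mul (by positivity : (0:ℝ) ≤ 3 * m),
          ← ENNReal.ofReal_add (by positivity) (by positivity)]
    _ = ENNReal.ofReal c₀ := by
        congr 1
        have : 3 * (m:ℝ) = c₀ ^ 2 := hc₀sq.symm
        rw [this]
        field_simp
        ring

/-- Gaussian band bound in product form. -/
lemma pi_gauss_band_le {m : ℕ} (hm : 1 ≤ m) {c : ℝ} (hc : 0 ≤ c) :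
    (Measure.pi fun _ : Fin (m + 1) => gaussianReal 0 1)
      {w | |w 0| ≤ c * √(∑ j : Fin m, (w j.succ) ^ 2)}
      ≤ ENNReal.ofReal (2 * (√(2 * π))⁻¹ * c * √(3 * m)) := by
  have h := measurePreserving_piFinSuccAbove (fun _ : Fin (m + 1) => gaussianReal 0 1) 0
  have hsumM : Measurable fun u : Fin m → ℝ => ∑ j, (u j) ^ 2 :=
    Finset.measurable_sum _ fun j _ => (measurable_pi_apply j).pow_const 2
  have hms : Measurable fun u : Fin m → ℝ => ENNReal.ofReal (√(∑ j, (u j) ^ 2)) :=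
    hsumM.sqrt.ennreal_ofReal
  set U : Set (ℝ × (Fin m → ℝ)) := {y | |y.1| ≤ c * √(∑ j, (y.2 j) ^ 2)} with hU
  have hUm : MeasurableSet U := by
    have hcont : Continuous fun y : ℝ × (Fin m → ℝ) => c * √(∑ j, (y.2 j) ^ 2) := by
      apply continuous_const.mul
      apply Real.continuous_sqrt.comp
      exact continuous_finset_sum _ fun j _ => ((continuous_apply j).comp continuous_snd).pow 2
    exact (isClosed_le (continuous_abs.comp continuous_fst) hcont).measurableSet
  have hpre : (MeasurableEquiv.piFinSuccAbove (fun _ : Fin (m + 1) => ℝ) 0) ⁻¹' U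
      = {w : Fin (m + 1) → ℝ | |w 0| ≤ c * √(∑ j : Fin m, (w j.succ) ^ 2)} := by
    ext w
    simp [hU, MeasurableEquiv.piFinSuccAbove_apply, Fin.removeNth, Fin.succAbove_zero, Fin.tail]
  calc (Measure.pi fun _ : Fin (m + 1) => gaussianReal 0 1)
        {w | |w 0| ≤ c * √(∑ j : Fin m, (w j.succ) ^ 2)}
      = (Measure.pi fun _ : Fin (m + 1) => gaussianReal 0 1)
          ((MeasurableEquiv.piFinSuccAbove (fun _ : Fin (m + 1) => ℝ) 0) ⁻¹' U) := by
        rw [hpre]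
    _ = ((gaussianReal 0 1).prod (Measure.pi fun _ : Fin m => gaussianReal 0 1)) U := by
        rw [← h.map_eq, Measure.map_apply (MeasurableEquiv.measurable _) hUm]
    _ = ∫⁻ u, gaussianReal 0 1 ((fun t => (t, u)) ⁻¹' U)
          ∂(Measure.pi fun _ : Fin m => gaussianReal 0 1) := Measure.prod_apply_symm hUm
    _ ≤ ∫⁻ u, ENNReal.ofReal (2 * (√(2 * π))⁻¹ * c)
          * ENNReal.ofReal (√(∑ j, (u j) ^ 2))
          ∂(Measure.pi fun _ : Fin m => gaussianReal 0 1) := by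
        refine lintegral_mono fun u => ?_
        have hsec : (fun t : ℝ => (t, u)) ⁻¹' U = {t : ℝ | |t| ≤ c * √(∑ j, (u j) ^ 2)} := rfl
        rw [hsec]
        calc gaussianReal 0 1 {t : ℝ | |t| ≤ c * √(∑ j, (u j) ^ 2)}
            ≤ ENNReal.ofReal (2 * (√(2 * π))⁻¹ * (c * √(∑ j, (u j) ^ 2))) :=
              gaussianReal_abs_le (by positivity)
          _ = ENNReal.ofReal (2 * (√(2 * π))⁻¹ * c) * ENNReal.ofReal (√(∑ j, (u j) ^ 2)) := by
              rw [← ENNReal.ofReal_mul (by positivity)]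
              ring_nf
    _ = ENNReal.ofReal (2 * (√(2 * π))⁻¹ * c)
          * ∫⁻ u, ENNReal.ofReal (√(∑ j, (u j) ^ 2))
            ∂(Measure.pi fun _ : Fin m => gaussianReal 0 1) := by
        rw [lintegral_const_mul _ hms]
    _ ≤ ENNReal.ofReal (2 * (√(2 * π))⁻¹ * c) * ENNReal.ofReal (√(3 * m)) :=
        mul_le_mul_right (pi_gauss_sqrt_sum_le hm) _
    _ = ENNReal.ofReal (2 * (√(2 * π))⁻¹ * c * √(3 * m)) := by
        rw [← ENNReal.ofReal_mul (by positivity)]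

/-- Conversion between the two forms of the band condition. -/
lemma band_cond_iff {γ : ℝ} (hγ0 : 0 < γ) (hγ1 : γ < 1) {a S : ℝ} (hS : 0 ≤ S) (ha : 0 ≤ a) :
    a ≤ γ * √(a ^ 2 + S) ↔ a ≤ γ / √(1 - γ ^ 2) * √S := by
  have h1γ : 0 < 1 - γ ^ 2 := by nlinarith
  set d : ℝ := √(1 - γ ^ 2) with hd
  have hdpos : 0 < d := Real.sqrt_pos.mpr h1γ
  have hd2 : d ^ 2 = 1 - γ ^ 2 := Real.sq_sqrt h1γ.le
  have key : ∀ x y : ℝ, 0 ≤ x → 0 ≤ y → (x ≤ y ↔ x ^ 2 ≤ y ^ 2) := fun x y hx hy =>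
    (pow_le_pow_iff_left₀ hx hy two_ne_zero).symm
  rw [key a _ ha (by positivity), key a _ ha (by positivity)]
  have e1 : (γ * √(a ^ 2 + S)) ^ 2 = γ ^ 2 * (a ^ 2 + S) := by
    rw [mul_pow, Real.sq_sqrt (by positivity)]
  have e2 : (γ / d * √S) ^ 2 = γ ^ 2 / d ^ 2 * S := by
    rw [mul_pow, div_pow, Real.sq_sqrt hS]
  rw [e1, e2, hd2]
  constructor
  · intro h
    rw [div_mul_eq_mul_div, le_div_iff₀ h1γ]
    nlinarith
  · intro h
    rw [div_mul_eq_mul_div, le_div_iff₀ h1γ] at h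
    nlinarith

end SphereProbAux

/-- If `v` is uniformly distributed on the unit sphere in `ℝⁿ` (`n ≥ 2`), i.e. its law `μ`
is a rotation-invariant probability measure supported on the sphere, `x` is a fixed unit
vector and `γ > 0`, then `ℙ(|⟪x,v⟫| ≤ γ) ≤ √(π n) γ`. -/
theorem sphere_inner_small_prob_le
    (n : ℕ) (hn : 2 ≤ n)
    (μ : Measure (EuclideanSpace ℝ (Fin n))) [IsProbabilityMeasure μ]
    (hsupp : ∀ᵐ v ∂μ, ‖v‖ = 1)
    (hinv : ∀ f : EuclideanSpace ℝ (Fin n) ≃ₗᵢ[ℝ] EuclideanSpace ℝ (Fin n),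
      μ.map f = μ)
    (x : EuclideanSpace ℝ (Fin n)) (hx : ‖x‖ = 1)
    (γ : ℝ) (hγ : 0 < γ) :
    (μ {v | |⟪x, v⟫| ≤ γ}).toReal ≤ Real.sqrt (π * n) * γ := by
  classical
  by_cases htriv : 1 ≤ √(π * n) * γ
  · calc (μ {v | |⟪x, v⟫| ≤ γ}).toReal
        ≤ (1 : ℝ≥0∞).toReal := ENNReal.toReal_mono ENNReal.one_ne_top prob_le_one
      _ = 1 := ENNReal.toReal_one
      _ ≤ √(π * n) * γ := htriv
  push_neg at htriv
  obtain ⟨m, rfl⟩ : ∃ m, n = m + 1 := ⟨n - 1, by omega⟩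
  have hm : 1 ≤ m := by omega
  have hm1 : (1 : ℝ) ≤ (m : ℝ) := by exact_mod_cast hm
  have hπ : (3.141592 : ℝ) < π := Real.pi_gt_d6
  have hcast : ((m + 1 : ℕ) : ℝ) = (m : ℝ) + 1 := by push_cast; ring
  rw [hcast] at htriv ⊢
  have hπn : (1 : ℝ) ≤ π * ((m : ℝ) + 1) := by nlinarith
  have hsqrtπn : (1 : ℝ) ≤ √(π * ((m : ℝ) + 1)) := by
    have h := Real.sqrt_le_sqrt hπn
    rwa [Real.sqrt_one] at h
  have hγ1 : γ < 1 := by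
    calc γ = 1 * γ := (one_mul γ).symm
      _ ≤ √(π * ((m : ℝ) + 1)) * γ := mul_le_mul_of_nonneg_right hsqrtπn hγ.le
      _ < 1 := htriv
  have hγsq : γ ^ 2 * (π * ((m : ℝ) + 1)) < 1 := by
    have h1 : 0 ≤ √(π * ((m : ℝ) + 1)) * γ := by positivity
    have h2 : (√(π * ((m : ℝ) + 1)) * γ) ^ 2 < 1 := by nlinarith
    have h3 : (√(π * ((m : ℝ) + 1)) * γ) ^ 2 = π * ((m : ℝ) + 1) * γ ^ 2 := by
      rw [mul_pow, Real.sq_sqrt (by positivity)]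
    nlinarith
  have h1γ : 0 < 1 - γ ^ 2 := by nlinarith
  set ν : Measure (EuclideanSpace ℝ (Fin (m + 1))) := SphereProbAux.gaussE (m + 1) with hν
  set e₀ : EuclideanSpace ℝ (Fin (m + 1)) := EuclideanSpace.single (0 : Fin (m + 1)) (1 : ℝ)
    with he₀def
  have he₀ : ‖e₀‖ = 1 := by rw [he₀def, EuclideanSpace.norm_single]; norm_num
  set S : Set (EuclideanSpace ℝ (Fin (m + 1)) × EuclideanSpace ℝ (Fin (m + 1))) :=
    {p | |⟪p.2, p.1⟫| ≤ γ * ‖p.2‖} with hSdef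
  have hS : MeasurableSet S := by
    have h1 : Continuous fun p : EuclideanSpace ℝ (Fin (m + 1)) × EuclideanSpace ℝ (Fin (m + 1))
        => |⟪p.2, p.1⟫| := (continuous_snd.inner continuous_fst).abs
    exact (isClosed_le h1 (continuous_const.mul continuous_snd.norm)).measurableSet
  have hfub : ∫⁻ v, ν (Prod.mk v ⁻¹' S) ∂μ = ∫⁻ z, μ ((fun v => (v, z)) ⁻¹' S) ∂ν := by
    rw [← Measure.prod_apply hS, Measure.prod_apply_symm hS]
  have hleft : ∫⁻ v, ν (Prod.mk v ⁻¹' S) ∂μ = ν {z | |⟪e₀, z⟫| ≤ γ * ‖z‖} := by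
    have hae : ∀ᵐ v ∂μ, ν (Prod.mk v ⁻¹' S) = ν {z | |⟪e₀, z⟫| ≤ γ * ‖z‖} := by
      filter_upwards [hsupp] with v hv
      have hsec : Prod.mk v ⁻¹' S = {z | |⟪v, z⟫| ≤ γ * ‖z‖} := by
        ext z
        simp only [hSdef, Set.mem_preimage, Set.mem_setOf_eq]
        rw [real_inner_comm]
      rw [hsec]
      exact SphereProbAux.measure_band_congr ν (SphereProbAux.gaussE_map (m + 1))
        (hv.trans he₀.symm) γ
    rw [lintegral_congr_ae hae, lintegral_const, measure_univ, mul_one]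
  have hright : ∫⁻ z, μ ((fun v => (v, z)) ⁻¹' S) ∂ν = μ {v | |⟪x, v⟫| ≤ γ} := by
    have h0 : ν {(0 : EuclideanSpace ℝ (Fin (m + 1)))} = 0 :=
      SphereProbAux.gaussE_singleton_zero m
    have haez : ∀ᵐ z ∂ν, z ≠ 0 := by
      refine ae_iff.mpr ?_
      have hset0 : {z : EuclideanSpace ℝ (Fin (m + 1)) | ¬ z ≠ 0} = {0} := by
        ext z; simp
      rw [hset0]
      exact h0
    have hae : ∀ᵐ z ∂ν, μ ((fun v => (v, z)) ⁻¹' S) = μ {v | |⟪x, v⟫| ≤ γ} := by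
      filter_upwards [haez] with z hz
      have hzpos : 0 < ‖z‖ := norm_pos_iff.mpr hz
      have hsec : (fun v => (v, z)) ⁻¹' S = {v | |⟪z, v⟫| ≤ γ * ‖z‖} := rfl
      rw [hsec]
      have step1 : μ {v | |⟪z, v⟫| ≤ γ * ‖z‖} = μ {v | |⟪z, v⟫| ≤ γ * ‖z‖ * ‖v‖} := by
        apply measure_congr
        filter_upwards [hsupp] with v hv
        show (|⟪z, v⟫| ≤ γ * ‖z‖) = (|⟪z, v⟫| ≤ γ * ‖z‖ * ‖v‖)
        rw [hv, mul_one]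
      have step2 : μ {v | |⟪z, v⟫| ≤ γ * ‖z‖ * ‖v‖}
          = μ {v | |⟪‖z‖ • x, v⟫| ≤ γ * ‖z‖ * ‖v‖} := by
        have hab : ‖z‖ = ‖‖z‖ • x‖ := by
          rw [norm_smul, hx, mul_one, norm_norm]
        exact SphereProbAux.measure_band_congr μ hinv hab (γ * ‖z‖)
      have step3 : {v : EuclideanSpace ℝ (Fin (m + 1)) | |⟪‖z‖ • x, v⟫| ≤ γ * ‖z‖ * ‖v‖}
          = {v | |⟪x, v⟫| ≤ γ * ‖v‖} := by
        ext v
        simp only [Set.mem_setOf_eq, real_inner_smul_left, abs_mul, abs_norm]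
        rw [show γ * ‖z‖ * ‖v‖ = ‖z‖ * (γ * ‖v‖) by ring, mul_le_mul_iff_right₀ hzpos]
      have step4 : μ {v | |⟪x, v⟫| ≤ γ * ‖v‖} = μ {v | |⟪x, v⟫| ≤ γ} := by
        apply measure_congr
        filter_upwards [hsupp] with v hv
        show (|⟪x, v⟫| ≤ γ * ‖v‖) = (|⟪x, v⟫| ≤ γ)
        rw [hv, mul_one]
      rw [step1, step2, step3, step4]
    rw [lintegral_congr_ae hae, lintegral_const, measure_univ, mul_one]
  have hPB : μ {v | |⟪x, v⟫| ≤ γ} = ν {z | |⟪e₀, z⟫| ≤ γ * ‖z‖} := by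
    rw [← hleft, hfub, hright]
  have hB2 : ν {z | |⟪e₀, z⟫| ≤ γ * ‖z‖}
      = (Measure.pi fun _ : Fin (m + 1) => ProbabilityTheory.gaussianReal 0 1)
          {w | |w 0| ≤ γ * √(∑ i : Fin (m + 1), (w i) ^ 2)} := by
    rw [hν, SphereProbAux.gaussE,
      Measure.map_apply (MeasurableEquiv.measurable _) (SphereProbAux.measurableSet_band e₀ γ)]
    congr 1
    ext w
    simp only [Set.mem_preimage, Set.mem_setOf_eq]
    have h1 : ⟪e₀, (MeasurableEquiv.toLp 2 (Fin (m + 1) → ℝ)) w⟫ = w 0 := by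
      rw [he₀def, EuclideanSpace.inner_single_left]
      simp only [map_one, one_mul]
      rfl
    have h2 : ‖(MeasurableEquiv.toLp 2 (Fin (m + 1) → ℝ)) w‖
        = √(∑ i : Fin (m + 1), (w i) ^ 2) := by
      rw [EuclideanSpace.norm_eq]
      congr 1
      refine Finset.sum_congr rfl fun i _ => ?_
      rw [Real.norm_eq_abs, sq_abs]
      rfl
    rw [h1, h2]
  have hsetiff : {w : Fin (m + 1) → ℝ | |w 0| ≤ γ * √(∑ i : Fin (m + 1), (w i) ^ 2)}
      = {w : Fin (m + 1) → ℝ | |w 0| ≤ γ / √(1 - γ ^ 2) * √(∑ j : Fin m, (w j.succ) ^ 2)} := by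
    ext w
    show (|w 0| ≤ γ * √(∑ i : Fin (m + 1), (w i) ^ 2))
      ↔ (|w 0| ≤ γ / √(1 - γ ^ 2) * √(∑ j : Fin m, (w j.succ) ^ 2))
    have hsum : ∑ i : Fin (m + 1), (w i) ^ 2 = |w 0| ^ 2 + ∑ j : Fin m, (w j.succ) ^ 2 := by
      rw [Fin.sum_univ_succ, sq_abs]
    rw [hsum]
    exact SphereProbAux.band_cond_iff hγ hγ1
      (Finset.sum_nonneg fun j _ => sq_nonneg _) (abs_nonneg _)
  have hc : 0 ≤ γ / √(1 - γ ^ 2) := by positivity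
  have hband := SphereProbAux.pi_gauss_band_le hm hc
  have hfinal : 2 * (√(2 * π))⁻¹ * (γ / √(1 - γ ^ 2)) * √(3 * m)
      ≤ √(π * ((m : ℝ) + 1)) * γ := by
    have hd2 : (√(1 - γ ^ 2)) ^ 2 = 1 - γ ^ 2 := Real.sq_sqrt h1γ.le
    have hdpos : 0 < √(1 - γ ^ 2) := Real.sqrt_pos.mpr h1γ
    have hsq : (2 * (√(2 * π))⁻¹ * (γ / √(1 - γ ^ 2)) * √(3 * m)) ^ 2
        ≤ (√(π * ((m : ℝ) + 1)) * γ) ^ 2 := by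
      have e0 : ((√(2 * π))⁻¹) ^ 2 = (2 * π)⁻¹ := by
        rw [inv_pow, Real.sq_sqrt (by positivity)]
      have ec : (γ / √(1 - γ ^ 2)) ^ 2 = γ ^ 2 / (1 - γ ^ 2) := by
        rw [div_pow, hd2]
      have e3m : (√(3 * (m : ℝ))) ^ 2 = 3 * m := Real.sq_sqrt (by positivity)
      have e1 : (2 * (√(2 * π))⁻¹ * (γ / √(1 - γ ^ 2)) * √(3 * m)) ^ 2
          = (12 * m * γ ^ 2) / (2 * π * (1 - γ ^ 2)) := by
        rw [mul_pow, mul_pow, mul_pow, e0, ec, e3m]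
        field_simp
        ring
      have e2 : (√(π * ((m : ℝ) + 1)) * γ) ^ 2 = π * ((m : ℝ) + 1) * γ ^ 2 := by
        rw [mul_pow, Real.sq_sqrt (by positivity)]
      rw [e1, e2, div_le_iff₀ (by positivity)]
      have hkey : 12 * (m : ℝ) ≤ 2 * π ^ 2 * ((m : ℝ) + 1) * (1 - γ ^ 2) := by
        nlinarith [sq_nonneg γ, sq_nonneg (π - 3)]
      calc 12 * (m : ℝ) * γ ^ 2 = γ ^ 2 * (12 * m) := by ring
        _ ≤ γ ^ 2 * (2 * π ^ 2 * ((m : ℝ) + 1) * (1 - γ ^ 2)) :=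
            mul_le_mul_of_nonneg_left hkey (sq_nonneg γ)
        _ = π * ((m : ℝ) + 1) * γ ^ 2 * (2 * π * (1 - γ ^ 2)) := by ring
    exact (pow_le_pow_iff_left₀ (by positivity) (by positivity) two_ne_zero).mp hsq
  have hfin2 : μ {v | |⟪x, v⟫| ≤ γ} ≤ ENNReal.ofReal (√(π * ((m : ℝ) + 1)) * γ) := by
    rw [hPB, hB2, hsetiff]
    exact le_trans hband (ENNReal.ofReal_le_ofReal hfinal)
  exact ENNReal.toReal_le_of_le_ofReal (by positivity) hfin2
end

section
/- Let $\theta^0, \theta \in \mathbb{R}^{mn}$ be partitioned into blocks $\theta_j, \theta_j^0 \in \mathbb{R}^n$, $j = 1,\ldots,m$, and let $x_1, \ldots, x_N \in \mathbb{R}^n$. Fix $k \in \{1,\ldots,m\}$ and suppose $\|\theta - \theta^0\| \le \sqrt{k}\, [x_i^\top \theta^0]_{k-}$ for all $i$, where $[x_i^\top \theta^0]_{k-}$ denotes the $k$-th smallest value of $(|x_i^\top \theta_1^0|, \ldots, |x_i^\top \theta_m^0|)$. Then for each $i$, the number of indices $j$ for which $x_i^\top \theta_j$ and $x_i^\top \theta_j^0$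 have strictly opposite signs is at most $2k$. -/
open scoped RealInnerProductSpace

open Classical in
/-- If the block-vector perturbation satisfies `‖θ - θ⁰‖ ≤ √k ⋅ [xᵢᵀθ⁰]_{k-}` for each `i`,
where `[xᵢᵀθ⁰]_{k-}` is the `k`-th smallest of `(|xᵢᵀθ⁰_1|, …, |xᵢᵀθ⁰_m|)` and `‖xᵢ‖ ≤ 1`,
then for each `i` at most `2k` of the inner products `xᵢᵀθ_j` flip sign strictly. -/
theorem sign_flip_count_le
    (n m N : ℕ) (k : ℕ) (hk1 : 1 ≤ k) (hkm : k ≤ m)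
    (θ θ₀ : Fin m → EuclideanSpace ℝ (Fin n))
    (x : Fin N → EuclideanSpace ℝ (Fin n)) (hx : ∀ i, ‖x i‖ ≤ 1)
    (kval : Fin N → ℝ)
    (hkval_mem : ∀ i, ∃ j, |⟪x i, θ₀ j⟫| = kval i)
    (hkval_lt : ∀ i, (Finset.univ.filter fun j => |⟪x i, θ₀ j⟫| < kval i).card < k)
    (hkval_le : ∀ i, k ≤ (Finset.univ.filter fun j => |⟪x i, θ₀ j⟫| ≤ kval i).card)
    (hdist : ∀ i, Real.sqrt (∑ j, ‖θ j - θ₀ j‖ ^ 2) ≤ Real.sqrt k * kval i) :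
    ∀ i, (Finset.univ.filter fun j => ⟪x i, θ j⟫ * ⟪x i, θ₀ j⟫ < 0).card ≤ 2 * k := by
  intro i
  set c := kval i with hc
  have hc0 : 0 ≤ c := by
    obtain ⟨j, hj⟩ := hkval_mem i
    rw [hc, ← hj]; positivity
  -- each inner product with the difference is bounded by the norm of the difference
  have hinner : ∀ j, ⟪x i, θ j - θ₀ j⟫ ^ 2 ≤ ‖θ j - θ₀ j‖ ^ 2 := by
    intro j
    have h1 : |⟪x i, θ j - θ₀ j⟫| ≤ ‖x i‖ * ‖θ j - θ₀ j‖ := abs_real_inner_le_norm _ _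
    have h2 : ‖x i‖ * ‖θ j - θ₀ j‖ ≤ ‖θ j - θ₀ j‖ := by
      nlinarith [hx i, norm_nonneg (θ j - θ₀ j), norm_nonneg (x i)]
    calc ⟪x i, θ j - θ₀ j⟫ ^ 2 = |⟪x i, θ j - θ₀ j⟫| ^ 2 := (sq_abs _).symm
      _ ≤ ‖θ j - θ₀ j‖ ^ 2 := by
          nlinarith [abs_nonneg ⟪x i, θ j - θ₀ j⟫]
  have hsum : ∑ j, ⟪x i, θ j - θ₀ j⟫ ^ 2 ≤ (k : ℝ) * c ^ 2 := by
    have hA0 : (0:ℝ) ≤ ∑ j, ‖θ j - θ₀ j‖ ^ 2 := by positivity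
    have hA : ∑ j, ‖θ j - θ₀ j‖ ^ 2 ≤ (k : ℝ) * c ^ 2 := by
      have h := hdist i
      nlinarith [Real.sq_sqrt hA0, Real.sqrt_nonneg (∑ j, ‖θ j - θ₀ j‖ ^ 2),
        Real.sq_sqrt (show (0:ℝ) ≤ (k : ℝ) from Nat.cast_nonneg k),
        Real.sqrt_nonneg ((k : ℝ))]
    calc ∑ j, ⟪x i, θ j - θ₀ j⟫ ^ 2 ≤ ∑ j, ‖θ j - θ₀ j‖ ^ 2 :=
          Finset.sum_le_sum (fun j _ => hinner j)
      _ ≤ (k : ℝ) * c ^ 2 := hA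
  -- a strict sign flip forces the original inner product to be dominated by the change
  have hflip : ∀ j, ⟪x i, θ j⟫ * ⟪x i, θ₀ j⟫ < 0 →
      ⟪x i, θ₀ j⟫ ^ 2 ≤ ⟪x i, θ j - θ₀ j⟫ ^ 2 := by
    intro j hj
    rw [inner_sub_right]
    nlinarith [hj]
  set S := Finset.univ.filter fun j => ⟪x i, θ j⟫ * ⟪x i, θ₀ j⟫ < 0 with hS
  -- sum over any subset of S is bounded
  have hsumS : ∀ T : Finset (Fin m), T ⊆ S → ∑ j ∈ T, ⟪x i, θ₀ j⟫ ^ 2 ≤ (k : ℝ) * c ^ 2 := by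
    intro T hT
    calc ∑ j ∈ T, ⟪x i, θ₀ j⟫ ^ 2
        ≤ ∑ j ∈ T, ⟪x i, θ j - θ₀ j⟫ ^ 2 := by
          refine Finset.sum_le_sum fun j hj => hflip j ?_
          have := hT hj
          simpa [hS] using this
      _ ≤ ∑ j, ⟪x i, θ j - θ₀ j⟫ ^ 2 := by
          refine Finset.sum_le_sum_of_subset_of_nonneg (Finset.subset_univ T) ?_
          intro j _ _; positivity
      _ ≤ (k : ℝ) * c ^ 2 := hsum
  by_cases hc_pos : 0 < c
  · -- split S into small and large original inner products
    set S₁ := S.filter (fun j => |⟪x i, θ₀ j⟫| < c) with hS₁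
    set S₂ := S.filter (fun j => ¬ |⟪x i, θ₀ j⟫| < c) with hS₂
    have hcard : S₁.card + S₂.card = S.card :=
      Finset.card_filter_add_card_filter_not (p := fun j => |⟪x i, θ₀ j⟫| < c)
    have h1 : S₁.card < k := by
      have hsub : S₁ ⊆ Finset.univ.filter fun j => |⟪x i, θ₀ j⟫| < c := by
        intro j hj
        simp only [hS₁, Finset.mem_filter] at hj ⊢
        exact ⟨Finset.mem_univ j, hj.2⟩
      exact lt_of_le_of_lt (Finset.card_le_card hsub) (hkval_lt i)
    have h2 : S₂.card ≤ k := by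
      by_contra h
      push_neg at h
      have hsub : S₂ ⊆ S := Finset.filter_subset _ _
      have hbound := hsumS S₂ hsub
      have hterm : ∀ j ∈ S₂, c ^ 2 ≤ ⟪x i, θ₀ j⟫ ^ 2 := by
        intro j hj
        simp only [hS₂, Finset.mem_filter, not_lt] at hj
        have := hj.2
        nlinarith [abs_nonneg ⟪x i, θ₀ j⟫, sq_abs ⟪x i, θ₀ j⟫]
      have hlow : (S₂.card : ℝ) * c ^ 2 ≤ ∑ j ∈ S₂, ⟪x i, θ₀ j⟫ ^ 2 := by
        calc (S₂.card : ℝ) * c ^ 2 = ∑ _j ∈ S₂, c ^ 2 := by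
              rw [Finset.sum_const, nsmul_eq_mul]
          _ ≤ ∑ j ∈ S₂, ⟪x i, θ₀ j⟫ ^ 2 := Finset.sum_le_sum hterm
      have hklt : (k : ℝ) < (S₂.card : ℝ) := by exact_mod_cast h
      have hc2 : 0 < c ^ 2 := pow_pos hc_pos 2
      nlinarith
    omega
  · -- kval i = 0 : no sign flips at all
    have hc_eq : c = 0 := le_antisymm (not_lt.mp hc_pos) hc0
    have hSempty : S = ∅ := by
      rw [Finset.eq_empty_iff_forall_notMem]
      intro j hj
      have hjS : ⟪x i, θ j⟫ * ⟪x i, θ₀ j⟫ < 0 := by simpa [hS] using hj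
      have hne : ⟪x i, θ₀ j⟫ ≠ 0 := by
        intro h0; rw [h0, mul_zero] at hjS; exact lt_irrefl _ hjS
      have hb := hsumS {j} (Finset.singleton_subset_iff.mpr hj)
      rw [Finset.sum_singleton, hc_eq] at hb
      have hp : 0 < |⟪x i, θ₀ j⟫| ^ 2 := pow_pos (abs_pos.mpr hne) 2
      rw [sq_abs] at hp
      linarith
    rw [hSempty]
    simp
end
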